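/- arXiv:2002.00859 — 2 statements merged into one kernel-verified Lean document; each statement's English description precedes it below -/
import Mathlib

section
/- Every isometric embedding φ of W₁([0,1]) into itself with φ(δ₀) = δ₀ and φ(δ_{1/2}) = δ_{1/2} is the identity map. -/
open MeasureTheory Set

noncomputable section

/-- Cumulative distribution function of a measure on `[0,1]`: `F_μ(x) = μ([0,x])`. -/
def cdfI (μ : Measure ℝ) (x : ℝ) : ℝ := (μ (Set.Icc 0 x)).toReal

/-- The Wasserstein space `W₁([0,1])`, realized as the set of Borel probability
measures on `ℝ` concentrated on `[0,1]`. -/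
def P01 : Set (Measure ℝ) := {μ | IsProbabilityMeasure μ ∧ μ (Set.Icc 0 1) = 1}

/-- Vallender's formula for the 1-Wasserstein distance on `[0,1]`. -/
def dW1I (μ ν : Measure ℝ) : ℝ := ∫ x in (0:ℝ)..1, |cdfI μ x - cdfI ν x|

/-!
Write `F_μ` for the cdf of `μ` and `σ_c` for the measure with cdf `c` on `[0, 1)`. Pointwise
`|F_ν - F_{δ_{1/2}}| ≤ |F_ν(1/2) - F_{δ_{1/2}}|`, and the right-hand side integrates to `1/2`
whatever `F_ν(1/2)` is; so the measures at distance `1/2` from `δ_{1/2}`, among them the `φ(σ_c)`,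
have a.e. constant cdf on `(0, 1]`, and the distance to `δ₀` identifies the constant as `c`.
Hence `φ` preserves `d(μ, σ_c) = ∫₀¹ |F_μ - c|`, the potential `c ↦ E|X - c|` of the law of
`X = F_μ(U)` with `U` uniform. A potential has right derivative `2 F_X - 1`, so it determines the
law of `X`; the cdf of that law is the generalized inverse of `F_μ`, which determines the
right-continuous `F_μ` on `[0, 1)` and with it `μ`.
-/

open ProbabilityTheory

namespace P01

variable {μ ν : Measure ℝ}

lemma measure_Iio_zero (hμ : μ ∈ P01) : μ (Iio 0) = 0 := by
  have := hμ.1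
  refine measure_mono_null (fun x hx => ?_) ((prob_compl_eq_zero_iff measurableSet_Icc).2 hμ.2)
  exact fun h => (not_le.2 hx) h.1

lemma cdf_eq_zero (hμ : μ ∈ P01) {x : ℝ} (hx : x < 0) : cdf μ x = 0 := by
  have := hμ.1
  rw [cdf_eq_real, measureReal_def, measure_mono_null (Iic_subset_Iio.2 hx) (measure_Iio_zero hμ),
    ENNReal.toReal_zero]

lemma cdf_eq_one (hμ : μ ∈ P01) {x : ℝ} (hx : 1 ≤ x) : cdf μ x = 1 := by
  have := hμ.1
  refine le_antisymm (cdf_le_one μ x) ?_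
  calc (1 : ℝ) = μ.real (Icc 0 1) := by rw [measureReal_def, hμ.2, ENNReal.toReal_one]
    _ ≤ cdf μ x := by
      rw [cdf_eq_real]
      exact measureReal_mono (Icc_subset_Iic_self.trans (Iic_subset_Iic.2 hx))

lemma cdfI_eq_cdf (hμ : μ ∈ P01) : cdfI μ = cdf μ := by
  have := hμ.1
  ext x
  rcases lt_or_ge x 0 with hx | hx
  · rw [cdf_eq_zero hμ hx, cdfI, Icc_eq_empty_of_lt hx, measure_empty, ENNReal.toReal_zero]
  · rw [cdfI, cdf_eq_real, measureReal_def]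
    congr 1
    refine le_antisymm (measure_mono Icc_subset_Iic_self) ?_
    calc μ (Iic x) ≤ μ (Iio 0) + μ (Icc 0 x) := by
          rw [← Iio_union_Icc_eq_Iic hx]; exact measure_union_le _ _
      _ = μ (Icc 0 x) := by rw [measure_Iio_zero hμ, zero_add]

lemma dW1I_eq (hμ : μ ∈ P01) (hν : ν ∈ P01) :
    dW1I μ ν = ∫ x in Ioc 0 1, |cdf μ x - cdf ν x| := by
  rw [dW1I, cdfI_eq_cdf hμ, cdfI_eq_cdf hν, intervalIntegral.integral_of_le zero_le_one]

lemma ext_of_cdf_eqOn (hμ : μ ∈ P01) (hν : ν ∈ P01) (h : EqOn (cdf μ) (cdf ν) (Ico 0 1)) :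
    μ = ν := by
  have := hμ.1
  have := hν.1
  refine Measure.eq_of_cdf μ ν (StieltjesFunction.ext fun x => ?_)
  rcases lt_or_ge x 0 with hx0 | hx0
  · rw [cdf_eq_zero hμ hx0, cdf_eq_zero hν hx0]
  rcases lt_or_ge x 1 with hx1 | hx1
  · exact h ⟨hx0, hx1⟩
  · rw [cdf_eq_one hμ hx1, cdf_eq_one hν hx1]

end P01

instance : IsProbabilityMeasure (volume.restrict (Ioc (0 : ℝ) 1)) :=
  ⟨by simp⟩

lemma integrableOn_cdf (μ : Measure ℝ) : IntegrableOn (cdf μ) (Ioc 0 1) :=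
  (monotone_cdf μ).intervalIntegrable.1

lemma cdf_dirac (t x : ℝ) : cdf (Measure.dirac t) x = if t ≤ x then 1 else 0 := by
  rw [cdf_eq_real, measureReal_def, Measure.dirac_apply' _ measurableSet_Iic]
  split_ifs with h <;> simp [h]

lemma dirac_mem_P01 {t : ℝ} (ht : t ∈ Icc 0 1) : Measure.dirac t ∈ P01 :=
  ⟨inferInstance, by simp [Measure.dirac_apply' _ measurableSet_Icc, ht]⟩

def twoPointMeasure (c : ℝ) : Measure ℝ :=
  ENNReal.ofReal c • Measure.dirac 0 + ENNReal.ofReal (1 - c) • Measure.dirac 1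

lemma twoPointMeasure_mem_P01 {c : ℝ} (hc : c ∈ Icc 0 1) : twoPointMeasure c ∈ P01 := by
  have hsum : ENNReal.ofReal c + ENNReal.ofReal (1 - c) = 1 := by
    rw [← ENNReal.ofReal_add hc.1 (sub_nonneg.2 hc.2), add_sub_cancel, ENNReal.ofReal_one]
  refine ⟨⟨?_⟩, ?_⟩ <;> simp [twoPointMeasure, Measure.dirac_apply' _ measurableSet_Icc, hsum]

lemma cdf_twoPointMeasure {c x : ℝ} (hc : c ∈ Icc 0 1) (hx : x ∈ Ico 0 1) :
    cdf (twoPointMeasure c) x = c := by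
  have := (twoPointMeasure_mem_P01 hc).1
  rw [cdf_eq_real, measureReal_def]
  simp [twoPointMeasure, Measure.dirac_apply' _ measurableSet_Iic, hx.1, hx.2, hc.1]

lemma ae_cdf_twoPointMeasure {c : ℝ} (hc : c ∈ Icc 0 1) :
    ∀ᵐ x ∂volume.restrict (Ioc (0 : ℝ) 1), cdf (twoPointMeasure c) x = c := by
  rw [← Measure.restrict_congr_set Ioo_ae_eq_Ioc]
  exact ae_restrict_of_forall_mem measurableSet_Ioo
    fun x hx => cdf_twoPointMeasure hc ⟨hx.1.le, hx.2⟩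

lemma dW1I_eq_of_ae_cdf_eq {μ ν : Measure ℝ} (hμ : μ ∈ P01) (hν : ν ∈ P01) {c : ℝ}
    (h : ∀ᵐ x ∂volume.restrict (Ioc (0 : ℝ) 1), cdf ν x = c) :
    dW1I μ ν = ∫ x in Ioc 0 1, |cdf μ x - c| := by
  rw [P01.dW1I_eq hμ hν]
  exact integral_congr_ae (h.mono fun x hx => by simp only [hx])

lemma integral_abs_cdf_dirac_zero_sub {c : ℝ} (hc : c ≤ 1) :
    ∫ x in Ioc 0 1, |cdf (Measure.dirac 0) x - c| = 1 - c := by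
  rw [setIntegral_congr_fun measurableSet_Ioc (g := fun _ => 1 - c)
    fun x hx => by simp [cdf_dirac, hx.1.le, hc]]
  simp

lemma integral_abs_cdf_dirac_half_sub {c : ℝ} (hc : c ∈ Icc 0 1) :
    ∫ x in Ioc 0 1, |cdf (Measure.dirac (1 / 2)) x - c| = 1 / 2 := by
  have hint : IntegrableOn (fun x => |cdf (Measure.dirac (1 / 2)) x - c|) (Ioc 0 1) :=
    ((integrableOn_cdf _).sub (integrableOn_const (by simp))).abs
  rw [← Ioo_union_Icc_eq_Ioc (by norm_num : (0 : ℝ) < 1 / 2) (by norm_num)] at hint ⊢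
  rw [setIntegral_union (disjoint_left.2 fun x hx hx' => hx.2.not_ge hx'.1) measurableSet_Icc
      (hint.mono_set subset_union_left) (hint.mono_set subset_union_right),
    setIntegral_congr_fun measurableSet_Ioo (g := fun _ => c)
      fun x hx => by rw [cdf_dirac, if_neg (not_le.2 hx.2), zero_sub, abs_neg, abs_of_nonneg hc.1],
    setIntegral_congr_fun measurableSet_Icc (g := fun _ => 1 - c)
      fun x hx => by rw [cdf_dirac, if_pos hx.1, abs_of_nonneg (sub_nonneg.2 hc.2)]]
  norm_num
  ring

lemma abs_cdf_dirac_sub_cdf_le (μ : Measure ℝ) (t x : ℝ) :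
    |cdf (Measure.dirac t) x - cdf μ x| ≤ |cdf (Measure.dirac t) x - cdf μ t| := by
  have := cdf_le_one μ x
  have := cdf_nonneg μ x
  rw [cdf_dirac]
  split_ifs with htx
  · have := monotone_cdf μ htx
    rw [abs_of_nonneg (by linarith), abs_of_nonneg (by linarith)]
    linarith
  · have := monotone_cdf μ (not_le.1 htx).le
    rw [zero_sub, zero_sub, abs_neg, abs_neg, abs_of_nonneg (by linarith),
      abs_of_nonneg (by linarith)]
    exact this

lemma cdf_eq_of_abs_cdf_dirac_sub_eq {μ : Measure ℝ} {t x : ℝ}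
    (h : |cdf (Measure.dirac t) x - cdf μ x| = |cdf (Measure.dirac t) x - cdf μ t|) :
    cdf μ x = cdf μ t := by
  have := cdf_le_one μ x
  have := cdf_le_one μ t
  have := cdf_nonneg μ x
  have := cdf_nonneg μ t
  rw [cdf_dirac] at h
  split_ifs at h
  · rw [abs_of_nonneg (by linarith), abs_of_nonneg (by linarith)] at h
    linarith
  · rw [zero_sub, zero_sub, abs_neg, abs_neg, abs_of_nonneg (by linarith),
      abs_of_nonneg (by linarith)] at h
    exact h

lemma ae_cdf_eq_of_dW1I_dirac_eq {ν : Measure ℝ} (hν : ν ∈ P01) {t : ℝ} (ht : t ∈ Icc 0 1)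
    (h : dW1I (Measure.dirac t) ν = ∫ x in Ioc 0 1, |cdf (Measure.dirac t) x - cdf ν t|) :
    ∀ᵐ x ∂volume.restrict (Ioc (0 : ℝ) 1), cdf ν x = cdf ν t := by
  rw [P01.dW1I_eq (dirac_mem_P01 ht) hν] at h
  refine ((integral_eq_iff_of_ae_le ?_ ?_ (ae_of_all _ fun x => abs_cdf_dirac_sub_cdf_le ν t x)).1
    h).mono fun x hx => cdf_eq_of_abs_cdf_dirac_sub_eq hx
  · exact ((integrableOn_cdf _).sub (integrableOn_cdf ν)).abs
  · exact ((integrableOn_cdf _).sub (integrableOn_const (by simp))).abs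

def potential (m : Measure ℝ) (a : ℝ) : ℝ := ∫ t, |t - a| ∂m

section Potential

variable {m : Measure ℝ} [IsProbabilityMeasure m]

lemma integral_indicator_Iic_sub (s d : ℝ) :
    ∫ t, ((Iic s).indicator (fun _ => 2 * d) t - d) ∂m = d * (2 * cdf m s - 1) := by
  rw [integral_sub ((integrable_const _).indicator measurableSet_Iic) (integrable_const d),
    integral_indicator_const _ measurableSet_Iic, integral_const, cdf_eq_real]
  simp only [probReal_univ, smul_eq_mul]
  ring

lemma potential_sub_potential (hm : Integrable id m) (a b : ℝ) :
    potential m b - potential m a = ∫ t, (|t - b| - |t - a|) ∂m :=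
  (integral_sub (hm.sub (integrable_const b)).abs (hm.sub (integrable_const a)).abs).symm

lemma mul_two_cdf_sub_one_le_potential_sub (hm : Integrable id m) {a b : ℝ} (hab : a ≤ b) :
    (b - a) * (2 * cdf m a - 1) ≤ potential m b - potential m a := by
  rw [potential_sub_potential hm, ← integral_indicator_Iic_sub]
  refine integral_mono (((integrable_const _).indicator measurableSet_Iic).sub (integrable_const _))
    ((hm.sub (integrable_const b)).abs.sub (hm.sub (integrable_const a)).abs) fun t => ?_
  rcases le_or_gt t a with hta | hta
  · rw [indicator_of_mem (mem_Iic.2 hta), abs_of_nonpos (by linarith), abs_of_nonpos (by linarith)]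
    linarith
  · have := abs_sub_abs_le_abs_sub (t - a) (t - b)
    rw [show t - a - (t - b) = b - a by ring, abs_of_nonneg (sub_nonneg.2 hab)] at this
    rw [indicator_of_notMem (notMem_Iic.2 hta)]
    linarith

lemma potential_sub_le_mul_two_cdf_sub_one (hm : Integrable id m) {a b : ℝ} (hab : a ≤ b) :
    potential m b - potential m a ≤ (b - a) * (2 * cdf m b - 1) := by
  rw [potential_sub_potential hm, ← integral_indicator_Iic_sub]
  refine integral_mono ((hm.sub (integrable_const b)).abs.sub (hm.sub (integrable_const a)).abs)
    (((integrable_const _).indicator measurableSet_Iic).sub (integrable_const _)) fun t => ?_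
  rcases le_or_gt t b with htb | htb
  · have := abs_sub_abs_le_abs_sub (t - b) (t - a)
    rw [show t - b - (t - a) = -(b - a) by ring, abs_neg, abs_of_nonneg (sub_nonneg.2 hab)] at this
    rw [indicator_of_mem (mem_Iic.2 htb)]
    linarith
  · rw [indicator_of_notMem (notMem_Iic.2 htb), abs_of_pos (by linarith), abs_of_pos (by linarith)]
    linarith

end Potential

/-- `potential m` has right derivative `2 * cdf m - 1`. -/
lemma cdf_eqOn_of_potential_eqOn {m n : Measure ℝ} [IsProbabilityMeasure m]
    [IsProbabilityMeasure n] (hm : Integrable id m) (hn : Integrable id n) {a b : ℝ}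
    (h : EqOn (potential m) (potential n) (Icc a b)) : EqOn (cdf m) (cdf n) (Ico a b) := by
  suffices key : ∀ {m n : Measure ℝ} [IsProbabilityMeasure m] [IsProbabilityMeasure n],
      Integrable id m → Integrable id n → EqOn (potential m) (potential n) (Icc a b) →
      ∀ s ∈ Ico a b, cdf m s ≤ cdf n s from
    fun s hs => le_antisymm (key hm hn h s hs) (key hn hm h.symm s hs)
  intro m n _ _ hm hn h s hs
  refine ge_of_tendsto (((cdf n).right_continuous s).mono Ioi_subset_Ici_self) ?_
  filter_upwards [Ioo_mem_nhdsGT hs.2] with s' hs'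
  have hlow := mul_two_cdf_sub_one_le_potential_sub hm hs'.1.le
  have hup := potential_sub_le_mul_two_cdf_sub_one hn hs'.1.le
  rw [h ⟨hs.1, hs.2.le⟩, h ⟨hs.1.trans hs'.1.le, hs'.2.le⟩] at hlow
  have := le_of_mul_le_mul_left (hlow.trans hup) (sub_pos.2 hs'.1)
  linarith

def cdfLaw (μ : Measure ℝ) : Measure ℝ := (volume.restrict (Ioc 0 1)).map (cdf μ)

section CdfLaw

variable (μ : Measure ℝ)

instance : IsProbabilityMeasure (cdfLaw μ) :=
  Measure.isProbabilityMeasure_map (monotone_cdf μ).measurable.aemeasurable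

lemma integrable_id_cdfLaw : Integrable id (cdfLaw μ) :=
  (integrable_map_measure aestronglyMeasurable_id (monotone_cdf μ).measurable.aemeasurable).2
    (integrableOn_cdf μ)

lemma potential_cdfLaw (a : ℝ) : potential (cdfLaw μ) a = ∫ x in Ioc 0 1, |cdf μ x - a| :=
  integral_map (monotone_cdf μ).measurable.aemeasurable
    (continuous_id.sub continuous_const).abs.aestronglyMeasurable

lemma cdf_cdfLaw (s : ℝ) :
    cdf (cdfLaw μ) s = (volume.restrict (Ioc (0 : ℝ) 1)).real (cdf μ ⁻¹' Iic s) := by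
  rw [cdf_eq_real, cdfLaw, map_measureReal_apply (monotone_cdf μ).measurable measurableSet_Iic]

variable {μ}

lemma lt_cdf_cdfLaw {x s : ℝ} (hx : x ∈ Ico 0 1) (hs : cdf μ x < s) : x < cdf (cdfLaw μ) s := by
  obtain ⟨y, hys, hy⟩ : ∃ y, cdf μ y < s ∧ y ∈ Ioo x 1 :=
    (((((cdf μ).right_continuous x).mono Ioi_subset_Ici_self).eventually_lt_const hs).and
      (Ioo_mem_nhdsGT hx.2)).exists
  calc x < y := hy.1
    _ = (volume.restrict (Ioc (0 : ℝ) 1)).real (Ioc 0 y) := by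
      rw [measureReal_restrict_apply measurableSet_Ioc,
        inter_eq_left.2 (Ioc_subset_Ioc_right hy.2.le), Real.volume_real_Ioc_of_le
          (hx.1.trans hy.1.le), sub_zero]
    _ ≤ (volume.restrict (Ioc (0 : ℝ) 1)).real (cdf μ ⁻¹' Iic s) :=
      measureReal_mono fun z hz => (monotone_cdf μ hz.2).trans hys.le
    _ = cdf (cdfLaw μ) s := (cdf_cdfLaw μ s).symm

lemma cdf_cdfLaw_le {x s : ℝ} (hx : 0 ≤ x) (hs : s < cdf μ x) : cdf (cdfLaw μ) s ≤ x := by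
  have hsub : cdf μ ⁻¹' Iic s ∩ Ioc 0 1 ⊆ Ioc 0 x := fun z hz =>
    ⟨hz.2.1, le_of_not_gt fun hxz => (hs.trans_le (monotone_cdf μ hxz.le)).not_ge hz.1⟩
  calc cdf (cdfLaw μ) s = volume.real (cdf μ ⁻¹' Iic s ∩ Ioc 0 1) := by
        rw [cdf_cdfLaw, measureReal_restrict_apply ((monotone_cdf μ).measurable measurableSet_Iic)]
    _ ≤ volume.real (Ioc 0 x) := measureReal_mono hsub measure_Ioc_lt_top.ne
    _ = x := by rw [Real.volume_real_Ioc_of_le hx, sub_zero]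

end CdfLaw

lemma cdf_eqOn_of_cdf_cdfLaw_eqOn {μ ν : Measure ℝ}
    (h : EqOn (cdf (cdfLaw μ)) (cdf (cdfLaw ν)) (Ico 0 1)) : EqOn (cdf μ) (cdf ν) (Ico 0 1) := by
  suffices key : ∀ {μ ν : Measure ℝ}, EqOn (cdf (cdfLaw μ)) (cdf (cdfLaw ν)) (Ico 0 1) →
      ∀ x ∈ Ico (0 : ℝ) 1, cdf μ x ≤ cdf ν x from
    fun x hx => le_antisymm (key h x hx) (key h.symm x hx)
  intro μ ν h x hx
  by_contra! hlt
  obtain ⟨s, hνs, hsμ⟩ := exists_between hlt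
  have hs : s ∈ Ico 0 1 := ⟨(cdf_nonneg ν x).trans hνs.le, hsμ.trans_le (cdf_le_one μ x)⟩
  exact lt_irrefl x <|
    (lt_cdf_cdfLaw hx hνs).trans_le ((h hs).symm.trans_le (cdf_cdfLaw_le hx.1 hsμ))

lemma ae_cdf_map_twoPointMeasure (φ : Measure ℝ → Measure ℝ) (hmaps : MapsTo φ P01 P01)
    (hiso : ∀ μ ∈ P01, ∀ ν ∈ P01, dW1I (φ μ) (φ ν) = dW1I μ ν)
    (h0 : φ (Measure.dirac 0) = Measure.dirac 0)
    (hhalf : φ (Measure.dirac (1 / 2 : ℝ)) = Measure.dirac (1 / 2 : ℝ)) {c : ℝ}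
    (hc : c ∈ Icc 0 1) :
    ∀ᵐ x ∂volume.restrict (Ioc (0 : ℝ) 1), cdf (φ (twoPointMeasure c)) x = c := by
  have hσ := twoPointMeasure_mem_P01 hc
  have hφσ := hmaps hσ
  have hδ0 : Measure.dirac (0 : ℝ) ∈ P01 := dirac_mem_P01 ⟨le_rfl, zero_le_one⟩
  have hhalf_mem : (1 / 2 : ℝ) ∈ Icc 0 1 := ⟨by norm_num, by norm_num⟩
  have hδhalf := dirac_mem_P01 hhalf_mem
  have hconst : ∀ᵐ x ∂volume.restrict (Ioc (0 : ℝ) 1),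
      cdf (φ (twoPointMeasure c)) x = cdf (φ (twoPointMeasure c)) (1 / 2) := by
    refine ae_cdf_eq_of_dW1I_dirac_eq hφσ hhalf_mem ?_
    calc dW1I (Measure.dirac (1 / 2)) (φ (twoPointMeasure c))
        = dW1I (Measure.dirac (1 / 2)) (twoPointMeasure c) := by rw [← hiso _ hδhalf _ hσ, hhalf]
      _ = 1 / 2 := by
        rw [dW1I_eq_of_ae_cdf_eq hδhalf hσ (ae_cdf_twoPointMeasure hc),
          integral_abs_cdf_dirac_half_sub hc]
      _ = _ := (integral_abs_cdf_dirac_half_sub ⟨cdf_nonneg _ _, cdf_le_one _ _⟩).symm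
  have hval : cdf (φ (twoPointMeasure c)) (1 / 2) = c := by
    have h := hiso _ hδ0 _ hσ
    rw [h0, dW1I_eq_of_ae_cdf_eq hδ0 hφσ hconst, dW1I_eq_of_ae_cdf_eq hδ0 hσ
      (ae_cdf_twoPointMeasure hc), integral_abs_cdf_dirac_zero_sub (cdf_le_one _ _),
      integral_abs_cdf_dirac_zero_sub hc.2] at h
    linarith
  exact hconst.mono fun x hx => hx.trans hval

/-- Every isometric embedding of `W₁([0,1])` into itself fixing `δ₀` and `δ_{1/2}`
is the identity. -/
theorem isemb_fixing_two_diracs_is_id (φ : Measure ℝ → Measure ℝ)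
    (hmaps : Set.MapsTo φ P01 P01)
    (hiso : ∀ μ ∈ P01, ∀ ν ∈ P01, dW1I (φ μ) (φ ν) = dW1I μ ν)
    (h0 : φ (Measure.dirac 0) = Measure.dirac 0)
    (hhalf : φ (Measure.dirac (1/2 : ℝ)) = Measure.dirac (1/2 : ℝ)) :
    ∀ μ ∈ P01, φ μ = μ := by
  intro μ hμ
  have hpot : EqOn (potential (cdfLaw (φ μ))) (potential (cdfLaw μ)) (Icc 0 1) := by
    intro c hc
    have hσ := twoPointMeasure_mem_P01 hc
    have hφσ := ae_cdf_map_twoPointMeasure φ hmaps hiso h0 hhalf hc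
    rw [potential_cdfLaw, potential_cdfLaw, ← dW1I_eq_of_ae_cdf_eq (hmaps hμ) (hmaps hσ) hφσ,
      ← dW1I_eq_of_ae_cdf_eq hμ hσ (ae_cdf_twoPointMeasure hc), hiso μ hμ _ hσ]
  exact P01.ext_of_cdf_eqOn (hmaps hμ) hμ (cdf_eqOn_of_cdf_cdfLaw_eqOn
    (cdf_eqOn_of_potential_eqOn (integrable_id_cdfLaw _) (integrable_id_cdfLaw _) hpot))
end
end

section
/- Let p > 1 and μ ∈ W_p([0,1]). Then the p-Wasserstein distance from μ to the set Δ([0,1]) of Dirac masses satisfies dist_{W_p}(μ, Δ([0,1])) ≤ 1/2, and equality holds if and only if μ = (1/2)δ₀ + (1/2)δ₁. -/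
open MeasureTheory Set

noncomputable section

/-- Quantile function (right-continuous generalized inverse of the CDF). -/
def quantI (μ : Measure ℝ) (t : ℝ) : ℝ := sSup {x : ℝ | cdfI μ x ≤ t}

/-- The `p`-Wasserstein distance on `[0,1]` via quantile functions. -/
def dWpI (p : ℝ) (μ ν : Measure ℝ) : ℝ :=
  (∫ t in (0:ℝ)..1, |quantI μ t - quantI ν t| ^ p) ^ (1 / p)


/-!
Write `Q = quantI μ` and `F = cdfI μ`, so that `dWpI p μ δ_t ^ p = ∫₀¹ |Q s - t| ^ p ds`.
Since `Q` takes values in `[0,1]`, the Dirac mass at `1/2` is within distance `1/2`.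
If no Dirac mass is closer, the bound at `t = 1/2` is sharp, so `|Q - 1/2| = 1/2` almost
everywhere. But `0 < Q < 1` on the interval `(F 0, F 1⁻)`, whose length is `μ (0,1)`;
hence `μ` is carried by `{0,1}` and `∫₀¹ |Q s - t| ^ p ds = a tᵖ + (1 - a) (1 - t)ᵖ`
with `a = μ {0}`.
This function of `t` attains its minimum `(1/2)ᵖ` at `t = 1/2` only if its derivative vanishes
there, i.e. `a = 1/2`. Conversely, for `a = 1/2` convexity of `tᵖ` gives the lower bound.
-/

open Filter Topology ProbabilityTheory Function

section Quantile

variable {μ : Measure ℝ} {s t x : ℝ}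

lemma ae_mem_Icc_of_mem_P01 (hμ : μ ∈ P01) : ∀ᵐ x ∂μ, x ∈ Icc (0:ℝ) 1 := by
  have : IsProbabilityMeasure μ := hμ.1
  rw [ae_iff, ← compl_def, prob_compl_eq_zero_iff measurableSet_Icc]
  exact hμ.2

lemma cdfI_eq_cdf (hμ : μ ∈ P01) : cdfI μ = cdf μ := by
  have : IsProbabilityMeasure μ := hμ.1
  funext x
  rw [cdfI, cdf_eq_real, measureReal_def]
  congr 1
  refine measure_congr (eventuallyEq_set.2 ?_)
  filter_upwards [ae_mem_Icc_of_mem_P01 hμ] with y hy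
  exact ⟨fun h => h.2, fun h => ⟨hy.1, h⟩⟩

lemma cdfI_mono (hμ : μ ∈ P01) : Monotone (cdfI μ) := cdfI_eq_cdf hμ ▸ (cdf μ).mono

lemma cdfI_of_neg (μ : Measure ℝ) (hx : x < 0) : cdfI μ x = 0 := by
  simp [cdfI, Icc_eq_empty_of_lt hx]

lemma cdfI_le_one (hμ : μ ∈ P01) (x : ℝ) : cdfI μ x ≤ 1 :=
  cdfI_eq_cdf hμ ▸ cdf_le_one μ x

lemma cdfI_of_one_le (hμ : μ ∈ P01) (hx : 1 ≤ x) : cdfI μ x = 1 := by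
  refine le_antisymm (cdfI_le_one hμ x) ?_
  calc (1 : ℝ) = cdfI μ 1 := by simp [cdfI, hμ.2]
    _ ≤ cdfI μ x := cdfI_mono hμ hx

lemma setOf_cdfI_le_subset_Iio (hμ : μ ∈ P01) (hs : s < 1) :
    {x | cdfI μ x ≤ s} ⊆ Iio 1 := fun _ hx =>
  lt_of_not_ge fun h1 => hs.not_ge (cdfI_of_one_le hμ h1 ▸ hx)

lemma Iio_zero_subset_setOf_cdfI_le (μ : Measure ℝ) (hs : 0 ≤ s) :
    Iio 0 ⊆ {x | cdfI μ x ≤ s} := fun _ hx => (cdfI_of_neg μ hx).trans_le hs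

lemma quantI_eq_of_forall_cdfI_le_iff {c : ℝ} (h : ∀ x, cdfI μ x ≤ s ↔ x < c) :
    quantI μ s = c := by
  rw [quantI, show {x | cdfI μ x ≤ s} = Iio c from Set.ext h, csSup_Iio]

lemma quantI_mem_Icc (hμ : μ ∈ P01) (hs : s ∈ Icc (0:ℝ) 1) :
    quantI μ s ∈ Icc (0:ℝ) 1 := by
  rcases hs.2.lt_or_eq with hs1 | rfl
  · have hsub := setOf_cdfI_le_subset_Iio hμ hs1
    refine ⟨?_, Real.sSup_le (fun x hx => (hsub hx).le) zero_le_one⟩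
    calc (0:ℝ) = sSup (Iio 0) := csSup_Iio.symm
      _ ≤ quantI μ s := csSup_le_csSup ⟨1, fun x hx => (hsub hx).le⟩ nonempty_Iio
          (Iio_zero_subset_setOf_cdfI_le μ hs.1)
  · -- junk value: `quantI μ 1 = sSup univ = 0`
    have : {x | cdfI μ x ≤ 1} = univ := eq_univ_of_forall (cdfI_le_one hμ)
    simp [quantI, this]

lemma quantI_eq_zero (hμ : μ ∈ P01) (hs0 : 0 ≤ s) (hs : s < cdfI μ 0) :
    quantI μ s = 0 :=
  quantI_eq_of_forall_cdfI_le_iff fun _ =>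
    ⟨fun hx => lt_of_not_ge fun h0 => (hs.trans_le (cdfI_mono hμ h0)).not_ge hx,
      fun hx => (cdfI_of_neg μ hx).trans_le hs0⟩

lemma quantI_eq_one (hμ : μ ∈ P01) (hs : leftLim (cdf μ) 1 ≤ s) (hs1 : s < 1) :
    quantI μ s = 1 :=
  quantI_eq_of_forall_cdfI_le_iff fun _ =>
    ⟨fun hx => setOf_cdfI_le_subset_Iio hμ hs1 hx,
      fun hx => cdfI_eq_cdf hμ ▸ ((cdf μ).mono.le_leftLim hx).trans hs⟩

lemma quantI_pos (hμ : μ ∈ P01) (hs : cdfI μ 0 < s) (hs1 : s < 1) : 0 < quantI μ s := by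
  rw [cdfI_eq_cdf hμ] at hs
  have hright : ∀ᶠ x in 𝓝[>] 0, cdf μ x < s :=
    ((cdf μ).right_continuous 0).mono Ioi_subset_Ici_self |>.eventually (gt_mem_nhds hs)
  obtain ⟨x, hx, hx0⟩ := (hright.and self_mem_nhdsWithin).exists
  have hbdd : BddAbove {x | cdfI μ x ≤ s} :=
    ⟨1, fun y hy => (setOf_cdfI_le_subset_Iio hμ hs1 hy).le⟩
  exact hx0.trans_le (le_csSup hbdd ((congrFun (cdfI_eq_cdf hμ) x).trans_le hx.le))

lemma quantI_lt_one (hμ : μ ∈ P01) (hs0 : 0 ≤ s) (hs : s < leftLim (cdf μ) 1) :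
    quantI μ s < 1 := by
  have hleft : ∀ᶠ y in 𝓝[<] 1, s < cdf μ y :=
    (cdf μ).mono.tendsto_leftLim 1 |>.eventually (lt_mem_nhds hs)
  obtain ⟨y, hy, hy1⟩ := (hleft.and self_mem_nhdsWithin).exists
  refine (csSup_le ⟨-1, Iio_zero_subset_setOf_cdfI_le μ hs0 (by norm_num)⟩ fun x hx => ?_)
    |>.trans_lt hy1
  exact le_of_lt <| lt_of_not_ge fun hyx =>
    (hy.trans_le ((cdf μ).mono hyx)).not_ge (cdfI_eq_cdf hμ ▸ hx)

lemma monotoneOn_quantI (hμ : μ ∈ P01) : MonotoneOn (quantI μ) (Ico 0 1) :=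
  fun _ hs _ hs' hss' =>
  csSup_le_csSup ⟨1, fun _ hx => (setOf_cdfI_le_subset_Iio hμ hs'.2 hx).le⟩
    ⟨-1, Iio_zero_subset_setOf_cdfI_le μ hs.1 (by norm_num)⟩ fun _ hx => le_trans hx hss'

lemma quantI_dirac (ht : 0 ≤ t) (hs0 : 0 ≤ s) (hs1 : s < 1) :
    quantI (Measure.dirac t) s = t := by
  refine quantI_eq_of_forall_cdfI_le_iff fun x => ?_
  by_cases h : t ≤ x
  · simp [cdfI, Measure.dirac_apply' _ measurableSet_Icc, h, ht, hs1.not_ge]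
  · simp [cdfI, Measure.dirac_apply' _ measurableSet_Icc, h, hs0, not_le.1 h]

end Quantile

section Integral

variable {μ : Measure ℝ} {p t : ℝ}

lemma abs_quantI_sub_le_one (hμ : μ ∈ P01) {s : ℝ} (hs : s ∈ Icc (0:ℝ) 1)
    (ht : t ∈ Icc (0:ℝ) 1) : |quantI μ s - t| ≤ 1 := by
  have hq := quantI_mem_Icc hμ hs
  exact abs_sub_le_iff.2 ⟨by linarith [hq.2, ht.1], by linarith [hq.1, ht.2]⟩

lemma abs_quantI_sub_half_le (hμ : μ ∈ P01) {s : ℝ} (hs : s ∈ Icc (0:ℝ) 1) :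
    |quantI μ s - 1/2| ≤ 1/2 := by
  have hq := quantI_mem_Icc hμ hs
  exact abs_sub_le_iff.2 ⟨by linarith [hq.2], by linarith [hq.1]⟩

lemma intervalIntegrable_abs_quantI_sub_rpow (hμ : μ ∈ P01) (hp : 0 ≤ p)
    (ht : t ∈ Icc (0:ℝ) 1) :
    IntervalIntegrable (fun s => |quantI μ s - t| ^ p) volume 0 1 := by
  rw [intervalIntegrable_iff_integrableOn_Ioc_of_le zero_le_one, IntegrableOn,
    ← Measure.restrict_congr_set Ico_ae_eq_Ioc]
  have hmeas :=
    aemeasurable_restrict_of_monotoneOn (μ := volume) measurableSet_Ico (monotoneOn_quantI hμ)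
  refine Integrable.mono' (integrable_const 1)
    ((hmeas.sub_const t).abs.pow_const p).aestronglyMeasurable ?_
  filter_upwards [ae_restrict_mem measurableSet_Ico] with s hs
  rw [Real.norm_of_nonneg (by positivity)]
  exact Real.rpow_le_one (abs_nonneg _) (abs_quantI_sub_le_one hμ (Ico_subset_Icc_self hs) ht) hp

lemma integral_abs_quantI_sub_rpow_nonneg (μ : Measure ℝ) (p t : ℝ) :
    0 ≤ ∫ s in (0:ℝ)..1, |quantI μ s - t| ^ p :=
  intervalIntegral.integral_nonneg zero_le_one fun _ _ => by positivity

lemma dWpI_nonneg (p : ℝ) (μ ν : Measure ℝ) : 0 ≤ dWpI p μ ν :=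
  Real.rpow_nonneg (intervalIntegral.integral_nonneg zero_le_one fun _ _ => by positivity) _

lemma dWpI_dirac (ht : 0 ≤ t) :
    dWpI p μ (Measure.dirac t) = (∫ s in (0:ℝ)..1, |quantI μ s - t| ^ p) ^ (1 / p) := by
  rw [dWpI]
  congr 1
  refine intervalIntegral.integral_congr_ae ?_
  -- `quantI (dirac t) 1 = 0`, so the integrands agree only off `s = 1`
  filter_upwards [Measure.ae_ne volume 1] with s hs1 hs
  rw [uIoc_of_le zero_le_one] at hs
  rw [quantI_dirac ht hs.1.le (hs.2.lt_of_ne hs1)]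

lemma le_dWpI_dirac_iff (hp : 0 < p) (ht : 0 ≤ t) {r : ℝ} (hr : 0 ≤ r) :
    r ≤ dWpI p μ (Measure.dirac t) ↔ r ^ p ≤ ∫ s in (0:ℝ)..1, |quantI μ s - t| ^ p := by
  rw [dWpI_dirac ht, one_div,
    Real.le_rpow_inv_iff_of_pos hr (integral_abs_quantI_sub_rpow_nonneg μ p t) hp]

lemma dWpI_dirac_le_iff (hp : 0 < p) (ht : 0 ≤ t) {r : ℝ} (hr : 0 ≤ r) :
    dWpI p μ (Measure.dirac t) ≤ r ↔ ∫ s in (0:ℝ)..1, |quantI μ s - t| ^ p ≤ r ^ p := by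
  rw [dWpI_dirac ht, one_div,
    Real.rpow_inv_le_iff_of_pos (integral_abs_quantI_sub_rpow_nonneg μ p t) hr hp]

lemma integral_abs_quantI_sub_half_rpow_le (hμ : μ ∈ P01) (hp : 0 ≤ p) :
    ∫ s in (0:ℝ)..1, |quantI μ s - 1/2| ^ p ≤ (1/2) ^ p := by
  calc ∫ s in (0:ℝ)..1, |quantI μ s - 1/2| ^ p ≤ ∫ _ in (0:ℝ)..1, (1/2 : ℝ) ^ p :=
        intervalIntegral.integral_mono_on zero_le_one
          (intervalIntegrable_abs_quantI_sub_rpow hμ hp (by norm_num)) intervalIntegrable_const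
          fun s hs => Real.rpow_le_rpow (abs_nonneg _) (abs_quantI_sub_half_le hμ hs) hp
    _ = (1/2) ^ p := by simp

lemma measure_Ioo_zero_one (hμ : μ ∈ P01) :
    μ (Ioo 0 1) = ENNReal.ofReal (leftLim (cdf μ) 1 - cdfI μ 0) := by
  have : IsProbabilityMeasure μ := hμ.1
  calc μ (Ioo 0 1) = (cdf μ).measure (Ioo 0 1) := by rw [measure_cdf]
    _ = _ := by rw [StieltjesFunction.measure_Ioo, cdfI_eq_cdf hμ]

lemma integral_abs_quantI_sub_half_rpow_lt (hμ : μ ∈ P01) (hp : 0 < p)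
    (hm : μ (Ioo 0 1) ≠ 0) :
    ∫ s in (0:ℝ)..1, |quantI μ s - 1/2| ^ p < (1/2) ^ p := by
  set a := cdfI μ 0
  set b := leftLim (cdf μ) 1
  have hab : a < b := by
    rwa [measure_Ioo_zero_one hμ, ne_eq, ENNReal.ofReal_eq_zero, not_le, sub_pos] at hm
  have ha : 0 ≤ a := ENNReal.toReal_nonneg
  have hb : b ≤ 1 := ((cdf μ).mono.leftLim_le le_rfl).trans (cdf_le_one μ 1)
  have hsub : Ioo a b ⊆ {s | |quantI μ s - 1/2| ^ p < (1/2) ^ p} := fun s hs => by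
    have hq0 := quantI_pos hμ hs.1 (hs.2.trans_le hb)
    have hq1 := quantI_lt_one hμ (ha.trans hs.1.le) hs.2
    exact Real.rpow_lt_rpow (abs_nonneg _) (abs_sub_lt_iff.2 ⟨by linarith, by linarith⟩) hp
  have hpos : volume.restrict (Ioc (0:ℝ) 1) {s | |quantI μ s - 1/2| ^ p < (1/2) ^ p} ≠ 0 := by
    refine (lt_of_lt_of_le ?_ (measure_mono hsub)).ne'
    rw [Measure.restrict_eq_self _ (Ioo_subset_Ioc_self.trans (Ioc_subset_Ioc ha hb)),
      Real.volume_Ioo, ENNReal.ofReal_pos, sub_pos]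
    exact hab
  calc ∫ s in (0:ℝ)..1, |quantI μ s - 1/2| ^ p < ∫ _ in (0:ℝ)..1, (1/2 : ℝ) ^ p := by
        refine intervalIntegral.integral_lt_integral_of_ae_le_of_measure_setOfPred_lt_ne_zero
          zero_le_one (intervalIntegrable_abs_quantI_sub_rpow hμ hp.le (by norm_num))
          intervalIntegrable_const ?_ hpos
        filter_upwards [ae_restrict_mem measurableSet_Ioc] with s hs
        exact Real.rpow_le_rpow (abs_nonneg _)
          (abs_quantI_sub_half_le hμ (Ioc_subset_Icc_self hs)) hp.le
    _ = (1/2) ^ p := by simp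

lemma integral_abs_quantI_sub_rpow_of_measure_Ioo (hμ : μ ∈ P01) (hm : μ (Ioo 0 1) = 0)
    (hp : 0 ≤ p) (ht : t ∈ Icc (0:ℝ) 1) :
    ∫ s in (0:ℝ)..1, |quantI μ s - t| ^ p =
      cdfI μ 0 * t ^ p + (1 - cdfI μ 0) * (1 - t) ^ p := by
  set a := cdfI μ 0
  have hb : leftLim (cdf μ) 1 ≤ a := by
    rwa [measure_Ioo_zero_one hμ, ENNReal.ofReal_eq_zero, sub_nonpos] at hm
  have ha0 : 0 ≤ a := ENNReal.toReal_nonneg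
  have ha1 : a ≤ 1 := cdfI_le_one hμ 0
  have hint := intervalIntegrable_abs_quantI_sub_rpow hμ hp ht
  have hleft : ∫ s in (0:ℝ)..a, |quantI μ s - t| ^ p = a * t ^ p := by
    rw [intervalIntegral.integral_congr_ae (g := fun _ => t ^ p), intervalIntegral.integral_const,
      smul_eq_mul, sub_zero]
    filter_upwards [Measure.ae_ne volume a] with s hsa hs
    rw [uIoc_of_le ha0] at hs
    rw [quantI_eq_zero hμ hs.1.le (hs.2.lt_of_ne hsa), zero_sub, abs_neg, abs_of_nonneg ht.1]
  have hright : ∫ s in a..1, |quantI μ s - t| ^ p = (1 - a) * (1 - t) ^ p := by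
    rw [intervalIntegral.integral_congr_ae (g := fun _ => (1 - t) ^ p),
      intervalIntegral.integral_const, smul_eq_mul]
    filter_upwards [Measure.ae_ne volume 1] with s hs1 hs
    rw [uIoc_of_le ha1] at hs
    rw [quantI_eq_one hμ (hb.trans hs.1.le) (hs.2.lt_of_ne hs1), abs_of_nonneg (sub_nonneg.2 ht.2)]
  rw [← intervalIntegral.integral_add_adjacent_intervals
    (hint.mono_set (uIcc_subset_uIcc left_mem_uIcc (mem_uIcc_of_le ha0 ha1)))
    (hint.mono_set (uIcc_subset_uIcc (mem_uIcc_of_le ha0 ha1) right_mem_uIcc)), hleft, hright]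

end Integral

lemma eq_one_half_of_forall_rpow_le {p a : ℝ} (hp : p ≠ 0)
    (h : ∀ t ∈ Icc (0:ℝ) 1, (1/2 : ℝ) ^ p ≤ a * t ^ p + (1 - a) * (1 - t) ^ p) :
    a = 1/2 := by
  have hmin : IsLocalMin (fun t : ℝ => a * t ^ p + (1 - a) * (1 - t) ^ p) (1/2) := by
    filter_upwards [Icc_mem_nhds (by norm_num : (0:ℝ) < 1/2) (by norm_num : (1/2:ℝ) < 1)]
      with t ht
    refine le_of_eq_of_le ?_ (h t ht)
    norm_num
    ring
  have hd₁ := (hasDerivAt_id (1/2 : ℝ)).rpow_const (p := p) (Or.inl (by norm_num))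
  have hd₂ := ((hasDerivAt_id (1/2 : ℝ)).const_sub 1).rpow_const (p := p) (Or.inl (by norm_num))
  have hderiv := hmin.hasDerivAt_eq_zero ((hd₁.const_mul a).add (hd₂.const_mul (1 - a)))
  have hc : p * (1/2 : ℝ) ^ (p - 1) ≠ 0 := mul_ne_zero hp (by positivity)
  -- `hderiv` says `p (1/2)^(p-1) (2a - 1) = 0`
  norm_num at hderiv
  have : (2 * a - 1) * (p * (1/2 : ℝ) ^ (p - 1)) = 0 := by linear_combination hderiv
  linarith [(mul_eq_zero.1 this).resolve_right hc]

lemma one_half_rpow_le_mean_rpow {p t : ℝ} (hp : 1 ≤ p) (ht : t ∈ Icc (0:ℝ) 1) :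
    (1/2 : ℝ) ^ p ≤ 1/2 * t ^ p + (1 - 1/2) * (1 - t) ^ p := by
  have h := (convexOn_rpow hp).2 (mem_Ici.2 ht.1) (mem_Ici.2 (sub_nonneg.2 ht.2))
    (by norm_num : (0:ℝ) ≤ 1/2) (by norm_num : (0:ℝ) ≤ 1 - 1/2) (by norm_num)
  rwa [smul_eq_mul, smul_eq_mul, smul_eq_mul, smul_eq_mul,
    show (1/2 : ℝ) * t + (1 - 1/2) * (1 - t) = 1/2 by ring] at h

lemma MeasureTheory.Measure.eq_smul_dirac_add_smul_dirac {α : Type*} [MeasurableSpace α]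
    [MeasurableSingletonClass α] {μ : Measure α} {a b : α} (hab : a ≠ b)
    (h : ∀ᵐ x ∂μ, x = a ∨ x = b) :
    μ = μ {a} • Measure.dirac a + μ {b} • Measure.dirac b := by
  rw [← Measure.restrict_singleton, ← Measure.restrict_singleton,
    ← Measure.restrict_union (disjoint_singleton.2 hab) (measurableSet_singleton b)]
  exact (Measure.restrict_eq_self_of_ae_mem h).symm

section Support

variable {μ : Measure ℝ}

lemma ae_eq_zero_or_eq_one (hμ : μ ∈ P01) (hm : μ (Ioo 0 1) = 0) :
    ∀ᵐ x ∂μ, x = 0 ∨ x = 1 := by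
  filter_upwards [ae_mem_Icc_of_mem_P01 hμ, measure_eq_zero_iff_ae_notMem.1 hm] with x hx hx'
  rcases hx.1.eq_or_lt with h0 | h0
  · exact Or.inl h0.symm
  · exact Or.inr (le_antisymm hx.2 (not_lt.1 fun h1 => hx' ⟨h0, h1⟩))

lemma eq_half_dirac_add_half_dirac_iff (hμ : μ ∈ P01) :
    μ = (1/2 : ENNReal) • Measure.dirac (0:ℝ) + (1/2 : ENNReal) • Measure.dirac (1:ℝ) ↔
      μ (Ioo 0 1) = 0 ∧ cdfI μ 0 = 1/2 := by
  constructor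
  · rintro rfl
    simp [cdfI, Measure.dirac_apply' _ measurableSet_Ioo]
  · rintro ⟨hm, ha⟩
    have : IsProbabilityMeasure μ := hμ.1
    have hdecomp := Measure.eq_smul_dirac_add_smul_dirac zero_ne_one (ae_eq_zero_or_eq_one hμ hm)
    have h0 : μ {0} = 1/2 := by
      rw [cdfI, Icc_self] at ha
      rw [← ENNReal.ofReal_toReal (measure_ne_top μ {0}), ha, one_div,
        ENNReal.ofReal_inv_of_pos two_pos, ENNReal.ofReal_ofNat, one_div]
    have h1 : μ {1} = 1/2 := by
      have := congrArg (fun ν : Measure ℝ => ν univ) hdecomp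
      simp only [measure_univ, h0, one_div, Measure.coe_add, Measure.coe_smul, Pi.add_apply,
        Pi.smul_apply, smul_eq_mul, mul_one] at this
      rw [one_div, ← ENNReal.add_right_inj (a := 2⁻¹) (by norm_num), ← this,
        ENNReal.inv_two_add_inv_two]
    rw [hdecomp, h0, h1]

end Support

/-- For `p > 1` and `μ ∈ W_p([0,1])`, the distance from `μ` to the set of Dirac masses
is at most `1/2`, with equality iff `μ = (1/2)δ₀ + (1/2)δ₁`. -/
theorem dist_to_diracs (p : ℝ) (hp : 1 < p) (μ : Measure ℝ) (hμ : μ ∈ P01) :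
    sInf {r : ℝ | ∃ t ∈ Set.Icc (0:ℝ) 1, r = dWpI p μ (Measure.dirac t)} ≤ 1 / 2 ∧
    (sInf {r : ℝ | ∃ t ∈ Set.Icc (0:ℝ) 1, r = dWpI p μ (Measure.dirac t)} = 1 / 2 ↔
      μ = (1/2 : ENNReal) • Measure.dirac (0:ℝ) + (1/2 : ENNReal) • Measure.dirac (1:ℝ)) := by
  set S := {r : ℝ | ∃ t ∈ Set.Icc (0:ℝ) 1, r = dWpI p μ (Measure.dirac t)}
  have hp0 : 0 < p := zero_lt_one.trans hp
  have hhalf : (1/2 : ℝ) ∈ Icc (0:ℝ) 1 := by norm_num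
  have hbdd : BddBelow S := ⟨0, by rintro _ ⟨t, -, rfl⟩; exact dWpI_nonneg p μ _⟩
  have hle : sInf S ≤ 1 / 2 :=
    csInf_le_of_le hbdd ⟨1/2, hhalf, rfl⟩ <| (dWpI_dirac_le_iff hp0 hhalf.1 hhalf.1).2
      (integral_abs_quantI_sub_half_rpow_le hμ hp0.le)
  refine ⟨hle, ?_⟩
  rw [← hle.ge_iff_eq, le_csInf_iff hbdd ⟨_, 1/2, hhalf, rfl⟩,
    eq_half_dirac_add_half_dirac_iff hμ]
  constructor
  · intro h
    have hI (t) (ht : t ∈ Icc (0:ℝ) 1) :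
        (1/2 : ℝ) ^ p ≤ ∫ s in (0:ℝ)..1, |quantI μ s - t| ^ p :=
      (le_dWpI_dirac_iff hp0 ht.1 hhalf.1).1 (h _ ⟨t, ht, rfl⟩)
    have hm : μ (Ioo 0 1) = 0 := by
      by_contra hm
      exact (hI _ hhalf).not_gt (integral_abs_quantI_sub_half_rpow_lt hμ hp0 hm)
    refine ⟨hm, eq_one_half_of_forall_rpow_le hp0.ne' fun t ht => ?_⟩
    rw [← integral_abs_quantI_sub_rpow_of_measure_Ioo hμ hm hp0.le ht]
    exact hI t ht
  · rintro ⟨hm, ha⟩ _ ⟨t, ht, rfl⟩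
    rw [le_dWpI_dirac_iff hp0 ht.1 hhalf.1,
      integral_abs_quantI_sub_rpow_of_measure_Ioo hμ hm hp0.le ht, ha]
    exact one_half_rpow_le_mean_rpow hp.le ht
end
end
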